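/- There exists a probability measure F on [0,∞) such that F belongs to 𝓛_loc, F does not belong to 𝓢_loc, and for every d > 0 the local distribution x ↦ F((x, x+d]) is not almost decreasing, i.e., for every d > 0 and every x₀ ≥ 0 one has sup_{x₀ ≤ x ≤ y < ∞} F((y, y+d])/F((x, x+d]) = ∞. -/

import Mathlib

open MeasureTheory Filter Set

noncomputable section

/-- The local mass `F((x, x+d])` of a measure, as a real number. -/
def locMass (F : Measure ℝ) (d x : ℝ) : ℝ := (F (Set.Ioc x (x + d))).toReal

/-- `F ∈ 𝓛_{Δ_d}` : the local distribution is eventually positive and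
`F(x+s+Δ_d)/F(x+Δ_d) → 1` uniformly in `|s| ≤ t`, for each `t > 0`. -/
def MemLdelta (F : Measure ℝ) (d : ℝ) : Prop :=
  (∀ᶠ x in atTop, 0 < locMass F d x) ∧
  ∀ t > (0:ℝ), ∀ ε > (0:ℝ), ∀ᶠ x in atTop, ∀ s : ℝ, |s| ≤ t →
    |locMass F d (x + s) / locMass F d x - 1| ≤ ε

/-- Convolution of two measures on `ℝ`: the law of the sum of two
independent random variables with laws `F` and `G`. -/
def mconv (F G : Measure ℝ) : Measure ℝ :=
  Measure.map (fun p : ℝ × ℝ => p.1 + p.2) (F.prod G)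

/-- `F ∈ 𝓢_{Δ_d}` : moreover `(F*F)(x+Δ_d)/F(x+Δ_d) → 2`. -/
def MemSdelta (F : Measure ℝ) (d : ℝ) : Prop :=
  MemLdelta F d ∧
  Tendsto (fun x => locMass (mconv F F) d x / locMass F d x) atTop (nhds 2)

/-- `F ∈ 𝓛_loc`. -/
def MemLloc (F : Measure ℝ) : Prop := ∀ d > (0:ℝ), MemLdelta F d

/-- `F ∈ 𝓢_loc`. -/
def MemSloc (F : Measure ℝ) : Prop := ∀ d > (0:ℝ), MemSdelta F d

/-- `F` is locally almost decreasing at level `d`. -/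
def LocAlmostDecr (F : Measure ℝ) (d : ℝ) : Prop :=
  ∃ x₀ : ℝ, (∀ x : ℝ, x₀ ≤ x → 0 < locMass F d x) ∧
    ∃ C : ℝ, ∀ x y : ℝ, x₀ ≤ x → x ≤ y → locMass F d y / locMass F d x ≤ C


/-! The witness has density proportional to `exp (-g)` on `[0, ∞)`, where
`g x = 2 log (x + 1) + √(x + 1) (1 + sin (log (x + 1)))`.

Since `|g'| ≤ 4 / √(x + 1)`, the potential `g` is almost constant on windows of bounded length
far out, so `log F(x + Δ_d) = log (d / Z) - g x + o(1)` with `Z = ∫₀^∞ e^{-g}`, which gives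
`F ∈ 𝓛_loc`. The oscillating term has amplitude `√(x + 1)`: writing `x + 1 = e^θ`, one has
`g = 2θ + e^{θ/2} (1 + sin θ)`, so from a point with `sin θ = 1` to the next one with
`sin θ = -1` the potential drops by about `2 e^{θ/2}`, and the local masses are not almost
decreasing. Finally, at `y = e^θ - 1` with `sin θ = -1` we have `g y = 2θ`, while
`log (2y + 1) - θ ∈ [log (3/2), log 2]` keeps `1 + sin (log (2y + 1))` away from `0`; hence
`g (2y) - 2 g y → ∞`, and the bound `(F * F)(2y + Δ_2) ≥ F(y + Δ_1)²` makes
`(F * F)(x + Δ_2) / F(x + Δ_2)` unbounded along `x = 2y`. -/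

open Real

theorem tendsto_div_atTop_of_tendsto_log_sub {ι : Type*} {l : Filter ι} {N D : ι → ℝ}
    (hN : ∀ i, 0 < N i) (hD : ∀ i, 0 < D i)
    (h : Tendsto (fun i => log (N i) - log (D i)) l atTop) :
    Tendsto (fun i => N i / D i) l atTop := by
  have hND : (fun i => N i / D i) = fun i => exp (log (N i) - log (D i)) := by
    ext i
    rw [exp_sub, exp_log (hN i), exp_log (hD i)]
  rw [hND]
  exact tendsto_exp_atTop.comp h

theorem tendsto_mul_exp_sub_mul_atTop {a : ℝ} (ha : 0 < a) (b : ℝ) :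
    Tendsto (fun u => a * exp u - b * u) atTop atTop := by
  refine tendsto_atTop_mono' _ ?_ tendsto_id
  filter_upwards [eventually_ge_atTop (max 0 (2 * (b + 1) / a))] with u hu
  have hu₀ : 0 ≤ u := le_of_max_le_left hu
  have hau : 2 * (b + 1) ≤ a * u := by
    have := le_of_max_le_right hu
    rw [div_le_iff₀ ha] at this
    linarith
  have hexp : u ^ 2 / 2 ≤ exp u := by
    nlinarith [quadratic_le_exp_of_nonneg hu₀]
  show u ≤ a * exp u - b * u
  nlinarith [mul_le_mul_of_nonneg_left hexp ha.le]

theorem memLdelta_of_abs_log_locMass_sub_le {F : Measure ℝ} {d : ℝ}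
    (hpos : ∀ᶠ x in atTop, 0 < locMass F d x)
    (hlog : ∀ t > (0 : ℝ), ∀ δ > (0 : ℝ), ∀ᶠ x in atTop, ∀ s : ℝ, |s| ≤ t →
      |log (locMass F d (x + s)) - log (locMass F d x)| ≤ δ) :
    MemLdelta F d := by
  refine ⟨hpos, fun t ht ε hε => ?_⟩
  obtain ⟨a, ha⟩ := eventually_atTop.1 hpos
  filter_upwards [hlog t ht (min 1 (ε / 2)) (by positivity), eventually_ge_atTop (a + t)]
    with x hx hxa s hs
  have hxs : 0 < locMass F d (x + s) := ha _ (by linarith [neg_abs_le s])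
  have hx₀ : 0 < locMass F d x := ha _ (by linarith [abs_nonneg s])
  have hδ := hx s hs
  rw [← exp_log hxs, ← exp_log hx₀, ← exp_sub]
  calc |exp (log (locMass F d (x + s)) - log (locMass F d x)) - 1|
      ≤ 2 * |log (locMass F d (x + s)) - log (locMass F d x)| :=
        abs_exp_sub_one_le (hδ.trans (min_le_left _ _))
    _ ≤ ε := by linarith [min_le_right 1 (ε / 2)]

theorem locMass_mul_le_locMass_mconv (F G : Measure ℝ) [IsFiniteMeasure F] [IsFiniteMeasure G]
    (d x y : ℝ) : locMass F d x * locMass G d y ≤ locMass (mconv F G) (2 * d) (x + y) := by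
  have hsub : Ioc x (x + d) ×ˢ Ioc y (y + d) ⊆
      (fun p : ℝ × ℝ => p.1 + p.2) ⁻¹' Ioc (x + y) (x + y + 2 * d) := by
    rintro ⟨u, v⟩ ⟨⟨hu₁, hu₂⟩, hv₁, hv₂⟩
    constructor <;> dsimp only <;> linarith
  have hmass :
      F (Ioc x (x + d)) * G (Ioc y (y + d)) ≤ mconv F G (Ioc (x + y) (x + y + 2 * d)) := by
    rw [mconv, Measure.map_apply (by fun_prop) measurableSet_Ioc, ← Measure.prod_prod]
    exact measure_mono hsub
  rw [locMass, locMass, locMass, ← ENNReal.toReal_mul]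
  have : IsFiniteMeasure (mconv F G) := Measure.isFiniteMeasure_map _ _
  exact ENNReal.toReal_mono (measure_ne_top _ _) hmass

theorem sq_locMass_le_locMass_mconv_self (F : Measure ℝ) [IsFiniteMeasure F] (d x : ℝ) :
    locMass F d x ^ 2 ≤ locMass (mconv F F) (2 * d) (2 * x) := by
  rw [sq, two_mul x]
  exact locMass_mul_le_locMass_mconv F F d x x

section ExpDensity

variable {g : ℝ → ℝ}

def normConst (g : ℝ → ℝ) : ℝ := ∫ x in Ici 0, exp (-g x)

def expDensityMeasure (g : ℝ → ℝ) : Measure ℝ :=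
  (volume.restrict (Ici 0)).withDensity fun x => ENNReal.ofReal (exp (-g x) / normConst g)

theorem normConst_pos (hg : IntegrableOn (fun x => exp (-g x)) (Ici 0)) : 0 < normConst g := by
  have : NeZero (volume.restrict (Ici (0 : ℝ))) := ⟨by simp⟩
  exact integral_exp_pos hg

theorem expDensityMeasure_apply (hg : IntegrableOn (fun x => exp (-g x)) (Ici 0)) {s : Set ℝ}
    (hs : MeasurableSet s) :
    expDensityMeasure g s = ENNReal.ofReal (∫ x in s ∩ Ici 0, exp (-g x) / normConst g) := by
  have hZ := normConst_pos hg
  rw [expDensityMeasure, withDensity_apply _ hs, Measure.restrict_restrict hs,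
    ofReal_integral_eq_lintegral_ofReal ((hg.mono_set inter_subset_right).div_const _)
      (ae_of_all _ fun x => by positivity)]

theorem isProbabilityMeasure_expDensityMeasure
    (hg : IntegrableOn (fun x => exp (-g x)) (Ici 0)) :
    IsProbabilityMeasure (expDensityMeasure g) := by
  constructor
  rw [expDensityMeasure_apply hg MeasurableSet.univ, univ_inter, integral_div]
  change ENNReal.ofReal (normConst g / normConst g) = 1
  rw [div_self (normConst_pos hg).ne', ENNReal.ofReal_one]

theorem expDensityMeasure_Iio_zero : expDensityMeasure g (Iio 0) = 0 := by
  rw [expDensityMeasure, withDensity_apply _ measurableSet_Iio,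
    Measure.restrict_restrict measurableSet_Iio, Iio_inter_Ici, Ico_self, Measure.restrict_empty,
    lintegral_zero_measure]

theorem locMass_expDensityMeasure (hg : IntegrableOn (fun x => exp (-g x)) (Ici 0)) {d x : ℝ}
    (hx : 0 ≤ x) :
    locMass (expDensityMeasure g) d x = ∫ u in Ioc x (x + d), exp (-g u) / normConst g := by
  have hZ := normConst_pos hg
  rw [locMass, expDensityMeasure_apply hg measurableSet_Ioc,
    inter_eq_left.2 fun u hu => mem_Ici.2 (hx.trans hu.1.le),
    ENNReal.toReal_ofReal (setIntegral_nonneg measurableSet_Ioc fun u _ => by positivity)]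

theorem locMass_expDensityMeasure_mem_Icc (hg : IntegrableOn (fun x => exp (-g x)) (Ici 0))
    {d x ε : ℝ} (hx : 0 ≤ x) (hd : 0 ≤ d)
    (hε : ∀ u ∈ Ioc x (x + d), |g u - g x| ≤ ε) :
    locMass (expDensityMeasure g) d x ∈
      Icc (d * exp (-g x - ε) / normConst g) (d * exp (-g x + ε) / normConst g) := by
  have hZ := normConst_pos hg
  have hint : IntegrableOn (fun u => exp (-g u) / normConst g) (Ioc x (x + d)) :=
    (hg.mono_set fun u hu => mem_Ici.2 (hx.trans hu.1.le)).div_const _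
  have hconst (c : ℝ) : ∫ _ in Ioc x (x + d), c / normConst g = d * c / normConst g := by
    rw [setIntegral_const, volume_real_Ioc_of_le (by linarith), smul_eq_mul, add_sub_cancel_left,
      mul_div_assoc]
  rw [locMass_expDensityMeasure hg hx, ← hconst, ← hconst]
  constructor
  · refine setIntegral_mono_on (integrableOn_const (by simp)) hint measurableSet_Ioc
      fun u hu => ?_
    gcongr
    linarith [(abs_le.1 (hε u hu)).2]
  · refine setIntegral_mono_on hint (integrableOn_const (by simp)) measurableSet_Ioc
      fun u hu => ?_
    gcongr
    linarith [(abs_le.1 (hε u hu)).1]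

end ExpDensity

def oscPotential (x : ℝ) : ℝ := 2 * log (x + 1) + √(x + 1) * (1 + sin (log (x + 1)))

theorem hasDerivAt_oscPotential {x : ℝ} (hx : -1 < x) :
    HasDerivAt oscPotential
      (2 / (x + 1) + ((1 + sin (log (x + 1))) / 2 + cos (log (x + 1))) / √(x + 1)) x := by
  have hx₁ : 0 < x + 1 := by linarith
  have hshift : HasDerivAt (fun y : ℝ => y + 1) 1 x := (hasDerivAt_id x).add_const 1
  have hlog := hshift.log hx₁.ne'
  have hsqrt := hshift.sqrt hx₁.ne'
  refine ((hlog.const_mul 2).add (hsqrt.mul (hlog.sin.const_add 1))).congr_deriv ?_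
  have hr : √(x + 1) ^ 2 = x + 1 := sq_sqrt hx₁.le
  have hr₀ : 0 < √(x + 1) := sqrt_pos.2 hx₁
  field_simp
  rw [hr]
  ring

theorem abs_deriv_oscPotential_le {x : ℝ} (hx : 0 ≤ x) :
    |2 / (x + 1) + ((1 + sin (log (x + 1))) / 2 + cos (log (x + 1))) / √(x + 1)| ≤
      4 / √(x + 1) := by
  have hr₁ : 1 ≤ √(x + 1) := one_le_sqrt.2 (by linarith)
  have hr : √(x + 1) ≤ x + 1 := (sqrt_le_left (by linarith)).2 (by nlinarith)
  have htrig : |(1 + sin (log (x + 1))) / 2 + cos (log (x + 1))| ≤ 2 := by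
    rw [abs_le]
    constructor <;> linarith [neg_one_le_sin (log (x + 1)), sin_le_one (log (x + 1)),
      neg_one_le_cos (log (x + 1)), cos_le_one (log (x + 1))]
  calc _ ≤ |2 / (x + 1)| + |((1 + sin (log (x + 1))) / 2 + cos (log (x + 1))) / √(x + 1)| :=
        abs_add_le _ _
    _ ≤ 2 / √(x + 1) + 2 / √(x + 1) := by
        rw [abs_div, abs_div, abs_of_pos (by positivity : (0 : ℝ) < x + 1), abs_two,
          abs_of_pos (by positivity : 0 < √(x + 1))]
        gcongr
    _ = 4 / √(x + 1) := by ring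

theorem abs_oscPotential_sub_le {a x y : ℝ} (ha : 0 ≤ a) (hx : a ≤ x) (hy : a ≤ y) :
    |oscPotential y - oscPotential x| ≤ 4 / √(a + 1) * |y - x| := by
  refine (convex_Ici a).norm_image_sub_le_of_norm_hasDerivWithin_le
    (fun u hu => (hasDerivAt_oscPotential (by linarith [mem_Ici.1 hu])).hasDerivWithinAt)
    (fun u hu => ?_) hx hy
  have hu : a ≤ u := hu
  refine (abs_deriv_oscPotential_le (ha.trans hu)).trans ?_
  gcongr

theorem two_mul_log_le_oscPotential (x : ℝ) : 2 * log (x + 1) ≤ oscPotential x := by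
  have : 0 ≤ 1 + sin (log (x + 1)) := by linarith [neg_one_le_sin (log (x + 1))]
  unfold oscPotential
  nlinarith [sqrt_nonneg (x + 1)]

theorem exp_neg_oscPotential_le {x : ℝ} (hx : 0 ≤ x) :
    exp (-oscPotential x) ≤ (1 + x ^ 2)⁻¹ := by
  rw [exp_neg]
  gcongr
  calc 1 + x ^ 2 ≤ exp (log (x + 1)) * exp (log (x + 1)) := by
        rw [exp_log (by linarith)]
        nlinarith
    _ = exp (2 * log (x + 1)) := by rw [← exp_add, two_mul]
    _ ≤ exp (oscPotential x) := exp_le_exp.2 (two_mul_log_le_oscPotential x)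

theorem measurable_oscPotential : Measurable oscPotential := by
  unfold oscPotential
  fun_prop

theorem integrableOn_exp_neg_oscPotential :
    IntegrableOn (fun x => exp (-oscPotential x)) (Ici 0) := by
  refine integrable_inv_one_add_sq.integrableOn.mono'
    (measurable_oscPotential.neg.exp.aestronglyMeasurable) ?_
  filter_upwards [ae_restrict_mem measurableSet_Ici] with x hx
  rw [norm_of_nonneg (exp_pos _).le]
  exact exp_neg_oscPotential_le hx

theorem oscPotential_exp_sub_one (θ : ℝ) :
    oscPotential (exp θ - 1) = 2 * θ + exp (θ / 2) * (1 + sin θ) := by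
  rw [oscPotential, sub_add_cancel, log_exp, exp_half]

theorem oscPotential_two_mul_exp_sub_one_ge {θ : ℝ} (hθ : log 2 ≤ θ) (hsin : sin θ = -1) :
    2 * θ + (1 - cos (log (3 / 2))) * exp (θ / 2) ≤ oscPotential (2 * (exp θ - 1)) := by
  have hcos : cos θ = 0 := by nlinarith [sin_sq_add_cos_sq θ]
  have hexp : exp (-θ) ≤ 1 / 2 := by
    rw [one_div, ← exp_log (two_pos : (0 : ℝ) < 2), ← exp_neg]
    exact exp_le_exp.2 (by linarith)
  set δ := log (2 - exp (-θ)) with hδ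
  have hδ₁ : log (3 / 2) ≤ δ := log_le_log (by norm_num) (by linarith)
  have hδ₂ : δ ≤ π := by
    have : δ < log 2 := log_lt_log (by linarith) (by linarith [exp_pos (-θ)])
    linarith [log_two_lt_d9, pi_gt_three]
  have hδ₀ : 0 ≤ δ := (log_nonneg (by norm_num)).trans hδ₁
  have hpoint : 2 * (exp θ - 1) = exp (θ + δ) - 1 := by
    have : exp θ * exp (-θ) = 1 := by rw [← exp_add, add_neg_cancel, exp_zero]
    rw [exp_add, hδ, exp_log (by linarith)]
    linear_combination this
  have hcosδ : cos δ ≤ cos (log (3 / 2)) :=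
    cos_le_cos_of_nonneg_of_le_pi (log_nonneg (by norm_num)) hδ₂ hδ₁
  have hκ : 0 ≤ 1 - cos (log (3 / 2)) := by linarith [cos_le_one (log (3 / 2))]
  rw [hpoint, oscPotential_exp_sub_one, sin_add, hsin, hcos]
  have hgrowth : exp (θ / 2) ≤ exp ((θ + δ) / 2) := exp_le_exp.2 (by linarith)
  nlinarith [mul_le_mul hgrowth (by linarith : 1 - cos (log (3 / 2)) ≤ 1 - cos δ) hκ
    (exp_pos _).le]

abbrev oscMeasure : Measure ℝ := expDensityMeasure oscPotential

instance : IsProbabilityMeasure oscMeasure :=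
  isProbabilityMeasure_expDensityMeasure integrableOn_exp_neg_oscPotential

theorem locMass_oscMeasure_mem_Icc {d x : ℝ} (hx : 0 ≤ x) (hd : 0 ≤ d) :
    locMass oscMeasure d x ∈
      Icc (d * exp (-oscPotential x - 4 * d / √(x + 1)) / normConst oscPotential)
      (d * exp (-oscPotential x + 4 * d / √(x + 1)) / normConst oscPotential) := by
  refine locMass_expDensityMeasure_mem_Icc integrableOn_exp_neg_oscPotential hx hd fun u hu => ?_
  calc |oscPotential u - oscPotential x| ≤ 4 / √(x + 1) * |u - x| :=
        abs_oscPotential_sub_le hx le_rfl hu.1.le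
    _ ≤ 4 / √(x + 1) * d := by
        gcongr
        rw [abs_of_pos (by linarith [hu.1])]
        linarith [hu.2]
    _ = 4 * d / √(x + 1) := by ring

theorem locMass_oscMeasure_pos {d x : ℝ} (hx : 0 ≤ x) (hd : 0 < d) :
    0 < locMass oscMeasure d x :=
  lt_of_lt_of_le (by have := normConst_pos integrableOn_exp_neg_oscPotential; positivity)
    (locMass_oscMeasure_mem_Icc hx hd.le).1

theorem abs_log_locMass_oscMeasure_sub_le {d x : ℝ} (hx : 0 ≤ x) (hd : 0 < d) :
    |log (locMass oscMeasure d x) - (log (d / normConst oscPotential) - oscPotential x)| ≤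
      4 * d / √(x + 1) := by
  have hZ := normConst_pos integrableOn_exp_neg_oscPotential
  have hlog (c : ℝ) :
      log (d * exp c / normConst oscPotential) = log (d / normConst oscPotential) + c := by
    rw [mul_div_right_comm, log_mul (by positivity) (exp_pos c).ne', log_exp]
  obtain ⟨hlo, hhi⟩ := locMass_oscMeasure_mem_Icc hx hd.le
  have hlo' := log_le_log (by positivity) hlo
  have hhi' := log_le_log (locMass_oscMeasure_pos hx hd) hhi
  rw [hlog] at hlo' hhi'
  rw [abs_le]
  constructor <;> linarith

theorem abs_log_locMass_oscMeasure_sub_le_four_mul {d x : ℝ} (hx : 0 ≤ x) (hd : 0 < d) :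
    |log (locMass oscMeasure d x) - (log (d / normConst oscPotential) - oscPotential x)| ≤
      4 * d :=
  (abs_log_locMass_oscMeasure_sub_le hx hd).trans
    (div_le_self (by positivity) (one_le_sqrt.2 (by linarith)))

theorem abs_log_locMass_oscMeasure_add_sub_le {d t x s : ℝ} (hd : 0 < d) (hxt : t ≤ x)
    (hs : |s| ≤ t) :
    |log (locMass oscMeasure d (x + s)) - log (locMass oscMeasure d x)| ≤
      (4 * t + 8 * d) / √(x - t + 1) := by
  obtain ⟨hs₁, hs₂⟩ := abs_le.1 hs
  have ha : 0 ≤ x - t := by linarith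
  have hr₀ : 0 < √(x - t + 1) := sqrt_pos.2 (by linarith)
  have hpot : |oscPotential (x + s) - oscPotential x| ≤ 4 * t / √(x - t + 1) := by
    calc _ ≤ 4 / √(x - t + 1) * |x + s - x| :=
          abs_oscPotential_sub_le ha (by linarith) (by linarith)
      _ ≤ 4 / √(x - t + 1) * t := by rw [add_sub_cancel_left]; gcongr
      _ = 4 * t / √(x - t + 1) := by ring
  have hxs : 4 * d / √(x + s + 1) ≤ 4 * d / √(x - t + 1) := by gcongr; linarith
  have hx₀ : 4 * d / √(x + 1) ≤ 4 * d / √(x - t + 1) := by gcongr; linarith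
  have h₁ := abs_le.1 (abs_log_locMass_oscMeasure_sub_le (x := x + s) (by linarith) hd)
  have h₂ := abs_le.1 (abs_log_locMass_oscMeasure_sub_le (x := x) (by linarith) hd)
  have h₃ := abs_le.1 hpot
  rw [show (4 * t + 8 * d) / √(x - t + 1) =
    4 * t / √(x - t + 1) + 4 * d / √(x - t + 1) + 4 * d / √(x - t + 1) by ring, abs_le]
  constructor <;> linarith

theorem memLloc_oscMeasure : MemLloc oscMeasure := by
  intro d hd
  refine memLdelta_of_abs_log_locMass_sub_le
    ((eventually_ge_atTop 0).mono fun x hx => locMass_oscMeasure_pos hx hd) fun t ht δ hδ => ?_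
  have hshift : Tendsto (fun x : ℝ => x - t + 1) atTop atTop :=
    tendsto_atTop_add_const_right _ _ (tendsto_atTop_add_const_right _ (-t) tendsto_id)
  have hlim : Tendsto (fun x => (4 * t + 8 * d) / √(x - t + 1)) atTop (nhds 0) :=
    tendsto_const_nhds.div_atTop (tendsto_sqrt_atTop.comp hshift)
  filter_upwards [hlim.eventually (ge_mem_nhds hδ), eventually_ge_atTop t] with x hx hxt s hs
  exact (abs_log_locMass_oscMeasure_add_sub_le hd hxt hs).trans hx

def troughAngle (m : ℕ) : ℝ := 3 * π / 2 + m * (2 * π)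

theorem sin_troughAngle (m : ℕ) : sin (troughAngle m) = -1 := by
  rw [troughAngle, sin_add_nat_mul_two_pi, show 3 * π / 2 = π / 2 + π by ring, sin_add_pi,
    sin_pi_div_two]

theorem pi_le_troughAngle (m : ℕ) : π ≤ troughAngle m := by
  rw [troughAngle]
  nlinarith [pi_pos, (m.cast_nonneg : (0 : ℝ) ≤ m)]

theorem tendsto_troughAngle_atTop : Tendsto troughAngle atTop atTop :=
  tendsto_atTop_add_const_left _ _ (tendsto_natCast_atTop_atTop.atTop_mul_const two_pi_pos)

theorem cos_log_three_halves_lt_one : cos (log (3 / 2)) < 1 := by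
  have hlog : log (3 / 2) ≤ π := by
    linarith [log_le_sub_one_of_pos (by norm_num : (0 : ℝ) < 3 / 2), pi_gt_three]
  simpa using cos_lt_cos_of_nonneg_of_le_pi le_rfl hlog (log_pos (by norm_num : (1 : ℝ) < 3 / 2))

theorem exists_lt_locMass_oscMeasure_div {d : ℝ} (hd : 0 < d) (x₀ C : ℝ) :
    ∃ x y, x₀ ≤ x ∧ x ≤ y ∧ C < locMass oscMeasure d y / locMass oscMeasure d x := by
  set θ := troughAngle
  have hpeak₀ (m : ℕ) : 0 ≤ exp (θ m - π) - 1 :=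
    sub_nonneg.2 (one_le_exp (by linarith [pi_le_troughAngle m]))
  have htrough₀ (m : ℕ) : 0 ≤ exp (θ m) - 1 :=
    sub_nonneg.2 (one_le_exp (by linarith [pi_le_troughAngle m, pi_pos]))
  have hshift : Tendsto (fun m => θ m - π) atTop atTop :=
    tendsto_atTop_add_const_right _ (-π) tendsto_troughAngle_atTop
  have hdrop : Tendsto (fun m => 2 * exp ((θ m - π) / 2) - 2 * π - 8 * d) atTop atTop :=
    tendsto_atTop_add_const_right _ _ (tendsto_atTop_add_const_right _ _
      ((tendsto_exp_atTop.comp (hshift.atTop_div_const two_pos)).const_mul_atTop two_pos))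
  have hratio : Tendsto (fun m => locMass oscMeasure d (exp (θ m) - 1) /
      locMass oscMeasure d (exp (θ m - π) - 1)) atTop atTop := by
    refine tendsto_div_atTop_of_tendsto_log_sub (fun m => locMass_oscMeasure_pos (htrough₀ m) hd)
      (fun m => locMass_oscMeasure_pos (hpeak₀ m) hd) (tendsto_atTop_mono (fun m => ?_) hdrop)
    have hpeak := oscPotential_exp_sub_one (θ m - π)
    have htrough := oscPotential_exp_sub_one (θ m)
    rw [sin_sub_pi, sin_troughAngle] at hpeak
    rw [sin_troughAngle] at htrough
    have h₁ := abs_le.1 (abs_log_locMass_oscMeasure_sub_le_four_mul (hpeak₀ m) hd)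
    have h₂ := abs_le.1 (abs_log_locMass_oscMeasure_sub_le_four_mul (htrough₀ m) hd)
    linarith
  have hpeak : Tendsto (fun m => exp (θ m - π) - 1) atTop atTop :=
    tendsto_atTop_add_const_right _ (-1) (tendsto_exp_atTop.comp hshift)
  obtain ⟨m, hm, hmC⟩ :=
    ((hpeak.eventually_ge_atTop x₀).and (hratio.eventually_gt_atTop C)).exists
  exact ⟨_, _, hm, by gcongr; linarith [pi_pos], hmC⟩

theorem not_memSdelta_oscMeasure_two : ¬ MemSdelta oscMeasure 2 := by
  intro hS
  set θ := troughAngle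
  set y : ℕ → ℝ := fun m => exp (θ m) - 1
  have hy₀ (m : ℕ) : 0 ≤ y m :=
    sub_nonneg.2 (one_le_exp (by linarith [pi_le_troughAngle m, pi_pos]))
  have hM₁ (m : ℕ) : 0 < locMass oscMeasure 1 (y m) := locMass_oscMeasure_pos (hy₀ m) one_pos
  have hconv (m : ℕ) :
      locMass oscMeasure 1 (y m) ^ 2 ≤ locMass (mconv oscMeasure oscMeasure) 2 (2 * y m) := by
    simpa using sq_locMass_le_locMass_mconv_self oscMeasure 1 (y m)
  have hgap : Tendsto (fun m => (1 - cos (log (3 / 2))) * exp (θ m / 2) - 4 * (θ m / 2) +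
      (2 * log (1 / normConst oscPotential) - log (2 / normConst oscPotential) - 16))
      atTop atTop :=
    tendsto_atTop_add_const_right _ _
      ((tendsto_mul_exp_sub_mul_atTop (sub_pos.2 cos_log_three_halves_lt_one) 4).comp
        (tendsto_troughAngle_atTop.atTop_div_const two_pos))
  have hratio : Tendsto (fun m => locMass (mconv oscMeasure oscMeasure) 2 (2 * y m) /
      locMass oscMeasure 2 (2 * y m)) atTop atTop := by
    refine tendsto_div_atTop_of_tendsto_log_sub (fun m => (pow_pos (hM₁ m) 2).trans_le (hconv m))
      (fun m => locMass_oscMeasure_pos (by linarith [hy₀ m]) two_pos)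
      (tendsto_atTop_mono (fun m => ?_) hgap)
    have hN : 2 * log (locMass oscMeasure 1 (y m)) ≤
        log (locMass (mconv oscMeasure oscMeasure) 2 (2 * y m)) := by
      simpa using log_le_log (pow_pos (hM₁ m) 2) (hconv m)
    have htrough := oscPotential_exp_sub_one (θ m)
    rw [sin_troughAngle] at htrough
    have hdouble := oscPotential_two_mul_exp_sub_one_ge
      (by linarith [pi_le_troughAngle m, log_two_lt_d9, pi_gt_three]) (sin_troughAngle m)
    have h₁ := abs_le.1 (abs_log_locMass_oscMeasure_sub_le_four_mul (hy₀ m) one_pos)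
    have h₂ := abs_le.1 (abs_log_locMass_oscMeasure_sub_le_four_mul
      (by linarith [hy₀ m] : 0 ≤ 2 * y m) two_pos)
    linarith
  have hz : Tendsto (fun m => 2 * y m) atTop atTop :=
    (tendsto_atTop_add_const_right _ (-1)
      (tendsto_exp_atTop.comp tendsto_troughAngle_atTop)).const_mul_atTop two_pos
  exact not_tendsto_nhds_of_tendsto_atTop hratio 2 (hS.2.comp hz)

theorem exists_local_longtailed_not_local_subexponential_not_locally_almost_decreasing :
    ∃ F : Measure ℝ, IsProbabilityMeasure F ∧ F (Set.Iio 0) = 0 ∧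
      MemLloc F ∧ ¬ MemSloc F ∧
      ∀ d > (0:ℝ), ∀ x₀ : ℝ, 0 ≤ x₀ → ∀ C : ℝ,
        ∃ x y : ℝ, x₀ ≤ x ∧ x ≤ y ∧ C < locMass F d y / locMass F d x :=
  ⟨oscMeasure, inferInstance, expDensityMeasure_Iio_zero, memLloc_oscMeasure,
    fun h => not_memSdelta_oscMeasure_two (h 2 two_pos),
    fun _ hd x₀ _ C => exists_lt_locMass_oscMeasure_div hd x₀ C⟩
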